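/- Let ρ be an η-polarized, tie-free ensemble of K-class classifiers such that P_{h~ρ}(h(x) ∉ A(x)) ≤ Δ for all data points (x,y), where y ∈ A(x) ⊆ [K] and |A(x)| ≤ M. Then L(h_ρ^MV) ≤ (2η(M−1)/M)·[(1 + Δ/(M−1))·E_ρ[L(h)] − (1/2)·E_{ρ²}[D(h,h')]]. -/

import Mathlib

open MeasureTheory

lemma toReal_compl_prob {α : Type*} [MeasurableSpace α] (ν : Measure α)
    [IsProbabilityMeasure ν] {s : Set α} (hs : MeasurableSet s) :
    (ν sᶜ).toReal = 1 - (ν s).toReal := by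
  rw [measure_compl hs (measure_ne_top _ _), measure_univ,
    ENNReal.toReal_sub_of_le prob_le_one ENNReal.one_ne_top, ENNReal.toReal_one]

lemma prob_toReal_le_one {α : Type*} [MeasurableSpace α] (ν : Measure α)
    [IsProbabilityMeasure ν] (s : Set α) : (ν s).toReal ≤ 1 := by
  calc (ν s).toReal ≤ (ν Set.univ).toReal :=
        ENNReal.toReal_mono (measure_ne_top _ _) (measure_mono (Set.subset_univ _))
    _ = 1 := by rw [measure_univ, ENNReal.toReal_one]

lemma pointwise_bound {H : Type*} [MeasurableSpace H] (ρ : Measure H) [IsProbabilityMeasure ρ]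
    {K : ℕ} (f : H → Fin K) (hf : ∀ j, MeasurableSet {c | f c = j})
    (y : Fin K) (Aset : Finset (Fin K)) (hy : y ∈ Aset) (M : ℕ) (hM : 2 ≤ M)
    (hcard : Aset.card ≤ M)
    (Δ : ℝ) (hleak : (ρ {c | f c ∉ Aset}).toReal ≤ Δ) :
    ((ρ {c | f c ≠ y}).toReal) ^ 2 ≤
      2 * ((M : ℝ) - 1) / M *
        ((1 + Δ / ((M : ℝ) - 1)) * (ρ {c | f c ≠ y}).toReal -
          ((ρ.prod ρ) {p : H × H | f p.1 ≠ f p.2}).toReal / 2) := by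
  set G : Fin K → Set H := fun j => {c | f c = j} with hG
  have hGd : ∀ (s : Finset (Fin K)), (↑s : Set (Fin K)).PairwiseDisjoint G := by
    intro s a _ b _ hab
    refine Set.disjoint_left.2 fun c hca hcb => hab ?_
    simp only [G, Set.mem_setOf_eq] at hca hcb
    exact hca ▸ hcb ▸ rfl
  set P : Fin K → ℝ := fun j => (ρ (G j)).toReal with hP
  have hPnn : ∀ j, 0 ≤ P j := fun j => ENNReal.toReal_nonneg
  have hsum : ∀ (s : Finset (Fin K)), (ρ (⋃ j ∈ s, G j)).toReal = ∑ j ∈ s, P j := by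
    intro s
    rw [measure_biUnion_finset (hGd s) (fun j _ => hf j)]
    exact ENNReal.toReal_sum fun a _ => measure_ne_top _ _
  -- total mass
  have hsum_univ : ∑ j : Fin K, P j = 1 := by
    have hU : (⋃ j ∈ (Finset.univ : Finset (Fin K)), G j) = Set.univ := by
      ext c; simp [G]
    rw [← hsum Finset.univ, hU, measure_univ, ENNReal.toReal_one]
  set w : ℝ := (ρ {c | f c ≠ y}).toReal with hwdef
  set q : ℝ := (ρ {c | f c ∉ Aset}).toReal with hqdef
  set D : ℝ := ((ρ.prod ρ) {p : H × H | f p.1 ≠ f p.2}).toReal with hDdef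
  have hw0 : 0 ≤ w := ENNReal.toReal_nonneg
  have hq0 : 0 ≤ q := ENNReal.toReal_nonneg
  -- w = 1 - P y
  have hw : w = 1 - P y := by
    have : {c | f c ≠ y} = (G y)ᶜ := by ext c; simp [G]
    rw [hwdef, this, toReal_compl_prob ρ (hf y)]
  -- q = 1 - ∑_{A} P j
  have hq : q = 1 - ∑ j ∈ Aset, P j := by
    have : {c | f c ∉ Aset} = (⋃ j ∈ Aset, G j)ᶜ := by ext c; simp [G]
    rw [hqdef, this, toReal_compl_prob ρ (Aset.measurableSet_biUnion fun j _ => hf j), hsum]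
  -- D = 1 - ∑ P j ^ 2
  have hD : D = 1 - ∑ j : Fin K, P j ^ 2 := by
    have hAg : {p : H × H | f p.1 = f p.2} = ⋃ j ∈ (Finset.univ : Finset (Fin K)), (G j ×ˢ G j) := by
      ext p
      simp only [Set.mem_setOf_eq, Finset.mem_univ, Set.iUnion_true, Set.mem_iUnion,
        Set.mem_prod, G]
      exact ⟨fun hp => ⟨f p.2, hp, rfl⟩, fun ⟨j, h1, h2⟩ => h1.trans h2.symm⟩
    have hdisj : (↑(Finset.univ : Finset (Fin K)) : Set (Fin K)).PairwiseDisjoint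
        (fun j => G j ×ˢ G j) := by
      intro a _ b _ hab
      refine Set.disjoint_left.2 fun p hpa hpb => hab ?_
      simp only [Set.mem_prod, G, Set.mem_setOf_eq] at hpa hpb
      exact hpa.1 ▸ hpb.1 ▸ rfl
    have hne : {p : H × H | f p.1 ≠ f p.2} = {p : H × H | f p.1 = f p.2}ᶜ := by
      ext p; simp
    have hAgm : MeasurableSet {p : H × H | f p.1 = f p.2} := by
      rw [hAg]; exact Finset.measurableSet_biUnion _ fun j _ => (hf j).prod (hf j)
    rw [hDdef, hne, toReal_compl_prob _ hAgm, hAg,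
      measure_biUnion_finset hdisj (fun j _ => (hf j).prod (hf j))]
    have : ((∑ j : Fin K, (ρ.prod ρ) (G j ×ˢ G j)).toReal) = ∑ j : Fin K, P j ^ 2 := by
      rw [ENNReal.toReal_sum fun a _ => measure_ne_top _ _]
      refine Finset.sum_congr rfl fun j _ => ?_
      rw [Measure.prod_prod, ENNReal.toReal_mul, sq]
    rw [this]
  -- arithmetic setup
  set s : ℝ := ∑ j ∈ Aset.erase y, P j with hsdef
  set t : ℝ := ∑ j ∈ Aset.erase y, P j ^ 2 with htdef
  set u : ℝ := ∑ j : Fin K, P j ^ 2 with hudef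
  have hsplit : s + P y = ∑ j ∈ Aset, P j := Finset.sum_erase_add _ _ hy
  have hs_eq : s = w - q := by rw [hw, hq]; linarith
  have hqw : q ≤ w := by
    have h1 : P y ≤ ∑ j ∈ Aset, P j := Finset.single_le_sum (fun j _ => hPnn j) hy
    rw [hw, hq]; linarith
  -- Cauchy-Schwarz
  have hcardR : ((Aset.erase y).card : ℝ) ≤ (M : ℝ) - 1 := by
    rw [Finset.card_erase_of_mem hy]
    have h1 : Aset.card - 1 ≤ M - 1 := by omega
    have h2 : 1 ≤ Aset.card := Finset.card_pos.2 ⟨y, hy⟩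
    calc ((Aset.card - 1 : ℕ) : ℝ) ≤ ((M - 1 : ℕ) : ℝ) := by exact_mod_cast h1
      _ = (M : ℝ) - 1 := by push_cast [Nat.cast_sub (by omega : 1 ≤ M)]; ring
  have htnn : 0 ≤ t := Finset.sum_nonneg fun j _ => sq_nonneg _
  have hCS : (w - q) ^ 2 ≤ ((M : ℝ) - 1) * t := by
    rw [← hs_eq]
    calc s ^ 2 ≤ ((Aset.erase y).card : ℝ) * t := sq_sum_le_card_mul_sum_sq
      _ ≤ ((M : ℝ) - 1) * t := mul_le_mul_of_nonneg_right hcardR htnn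
  -- sum over A ≤ sum over univ
  have hsub : P y ^ 2 + t ≤ u := by
    have h1 : ∑ j ∈ Aset, P j ^ 2 ≤ u :=
      Finset.sum_le_sum_of_subset_of_nonneg (Finset.subset_univ _)
        (fun j _ _ => sq_nonneg _)
    have h2 : t + P y ^ 2 = ∑ j ∈ Aset, P j ^ 2 := Finset.sum_erase_add _ _ hy
    linarith
  have hPy : P y = 1 - w := by linarith [hw]
  rw [hPy] at hsub
  have hMR : (2 : ℝ) ≤ (M : ℝ) := by exact_mod_cast hM
  have hM0 : (0 : ℝ) < M := by linarith
  have hM1 : (0 : ℝ) < (M : ℝ) - 1 := by linarith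
  have g1 : ((M : ℝ) - 1) * ((1 - w) ^ 2 + t) ≤ ((M : ℝ) - 1) * u :=
    mul_le_mul_of_nonneg_left hsub (le_of_lt hM1)
  have f1 : ((M : ℝ) - 1) * D ≤ ((M : ℝ) - 1) * (2 * w - w ^ 2) - (w - q) ^ 2 := by
    nlinarith [g1, hCS, hD]
  have hrw : 2 * ((M : ℝ) - 1) / M * ((1 + Δ / ((M : ℝ) - 1)) * w - D / 2) =
      (2 * ((M : ℝ) - 1) * w + 2 * Δ * w - ((M : ℝ) - 1) * D) / M := by
    field_simp
  rw [hrw, le_div_iff₀ hM0]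
  nlinarith [f1, mul_nonneg (sub_nonneg.2 hleak) hw0, sq_nonneg q]

theorem entropy_restricted_bound {Ω H X : Type*} [MeasurableSpace Ω] [MeasurableSpace H]
    (K M : ℕ) (hM : 2 ≤ M)
    (μ : Measure Ω) [IsProbabilityMeasure μ] (ρ : Measure H) [IsProbabilityMeasure ρ]
    (h : H → X → Fin K) (ptX : Ω → X) (ptY : Ω → Fin K) (hMV : X → Fin K)
    (η Δ : ℝ) (hη : 0 ≤ η) (hΔ : 0 ≤ Δ)
    (A : X → Finset (Fin K))
    (hA : ∀ ω, ptY ω ∈ A (ptX ω))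
    (hAcard : ∀ ω, (A (ptX ω)).card ≤ M)
    (hAleak : ∀ ω, (ρ {c | h c (ptX ω) ∉ A (ptX ω)}).toReal ≤ Δ)
    (W : Ω → ℝ) (hWdef : ∀ ω, W ω = (ρ {c | h c (ptX ω) ≠ ptY ω}).toReal)
    (hjm : MeasurableSet {q : H × Ω | h q.1 (ptX q.2) ≠ ptY q.2})
    (hjm' : MeasurableSet {q : (H × H) × Ω | h q.1.1 (ptX q.2) ≠ h q.1.2 (ptX q.2)})
    -- η-polarized
    (hpol : (μ {ω | W ω > 1 / 2}).toReal ≤ η * ∫ ω, (W ω) ^ 2 ∂μ)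
    -- tie-free, so the majority-vote error is bounded by P(W > 1/2)
    (htiefree : (μ {ω | hMV (ptX ω) ≠ ptY ω}).toReal ≤ (μ {ω | W ω > 1 / 2}).toReal) :
    (μ {ω | hMV (ptX ω) ≠ ptY ω}).toReal ≤
      2 * η * ((M : ℝ) - 1) / M *
        ((1 + Δ / ((M : ℝ) - 1)) * (∫ c, (μ {ω | h c (ptX ω) ≠ ptY ω}).toReal ∂ρ) -
          (1 / 2) * ∫ p, (μ {ω | h p.1 (ptX ω) ≠ h p.2 (ptX ω)}).toReal ∂(ρ.prod ρ)) := by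
  set S : Set (H × Ω) := {q | h q.1 (ptX q.2) ≠ ptY q.2} with hS
  set S' : Set ((H × H) × Ω) := {q | h q.1.1 (ptX q.2) ≠ h q.1.2 (ptX q.2)} with hS'
  set Dfun : Ω → ℝ :=
    fun ω => ((ρ.prod ρ) {p : H × H | h p.1 (ptX ω) ≠ h p.2 (ptX ω)}).toReal with hDfun
  -- measurability
  have hWmeas : Measurable W := by
    have hWe : W = fun ω => (ρ ((fun c => (c, ω)) ⁻¹' S)).toReal := funext fun ω => hWdef ω
    rw [hWe]
    exact (measurable_measure_prodMk_right hjm).ennreal_toReal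
  have hDmeas : Measurable Dfun :=
    (measurable_measure_prodMk_right (μ := ρ.prod ρ) hjm').ennreal_toReal
  -- bounds
  have hW0 : ∀ ω, 0 ≤ W ω := fun ω => by rw [hWdef ω]; exact ENNReal.toReal_nonneg
  have hW1 : ∀ ω, W ω ≤ 1 := fun ω => by rw [hWdef ω]; exact prob_toReal_le_one ρ _
  have hD0 : ∀ ω, 0 ≤ Dfun ω := fun ω => ENNReal.toReal_nonneg
  have hD1 : ∀ ω, Dfun ω ≤ 1 := fun ω => prob_toReal_le_one _ _
  -- integrability
  have hWint : Integrable W μ := by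
    refine (integrable_const (1 : ℝ)).mono' hWmeas.aestronglyMeasurable ?_
    filter_upwards with ω
    rw [Real.norm_eq_abs, abs_of_nonneg (hW0 ω)]; exact hW1 ω
  have hW2int : Integrable (fun ω => W ω ^ 2) μ := by
    refine (integrable_const (1 : ℝ)).mono' (hWmeas.pow_const 2).aestronglyMeasurable ?_
    filter_upwards with ω
    rw [Real.norm_eq_abs, abs_of_nonneg (sq_nonneg _)]
    calc W ω ^ 2 ≤ 1 ^ 2 := by gcongr; exacts [hW0 ω, hW1 ω]
      _ = 1 := one_pow 2
  have hDint : Integrable Dfun μ := by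
    refine (integrable_const (1 : ℝ)).mono' hDmeas.aestronglyMeasurable ?_
    filter_upwards with ω
    rw [Real.norm_eq_abs, abs_of_nonneg (hD0 ω)]; exact hD1 ω
  -- Fubini for W
  have hEq1 : ∫ c, (μ {ω | h c (ptX ω) ≠ ptY ω}).toReal ∂ρ = ∫ ω, W ω ∂μ := by
    have l1 : ∫ c, (μ {ω | h c (ptX ω) ≠ ptY ω}).toReal ∂ρ =
        (∫⁻ c, μ (Prod.mk c ⁻¹' S) ∂ρ).toReal := by
      apply integral_toReal (measurable_measure_prodMk_left hjm).aemeasurable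
      filter_upwards with c using measure_lt_top _ _
    have l2 : ∫ ω, W ω ∂μ = (∫⁻ ω, ρ ((fun c => (c, ω)) ⁻¹' S) ∂μ).toReal := by
      have hWe : W = fun ω => (ρ ((fun c => (c, ω)) ⁻¹' S)).toReal := funext fun ω => hWdef ω
      rw [hWe]
      apply integral_toReal (measurable_measure_prodMk_right hjm).aemeasurable
      filter_upwards with ω using measure_lt_top _ _
    rw [l1, l2, ← Measure.prod_apply hjm, ← Measure.prod_apply_symm hjm]
  -- Fubini for D
  have hEq2 : ∫ p, (μ {ω | h p.1 (ptX ω) ≠ h p.2 (ptX ω)}).toReal ∂(ρ.prod ρ) =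
      ∫ ω, Dfun ω ∂μ := by
    have l1 : ∫ p, (μ {ω | h p.1 (ptX ω) ≠ h p.2 (ptX ω)}).toReal ∂(ρ.prod ρ) =
        (∫⁻ p, μ (Prod.mk p ⁻¹' S') ∂(ρ.prod ρ)).toReal := by
      apply integral_toReal (measurable_measure_prodMk_left hjm').aemeasurable
      filter_upwards with p using measure_lt_top _ _
    have l2 : ∫ ω, Dfun ω ∂μ = (∫⁻ ω, (ρ.prod ρ) ((fun p => (p, ω)) ⁻¹' S') ∂μ).toReal := by
      apply integral_toReal (measurable_measure_prodMk_right hjm').aemeasurable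
      filter_upwards with ω using measure_lt_top _ _
    rw [l1, l2, ← Measure.prod_apply hjm', ← Measure.prod_apply_symm hjm']
  -- pointwise bound
  have hMR : (2 : ℝ) ≤ (M : ℝ) := by exact_mod_cast hM
  have hpt : ∀ ω, W ω ^ 2 ≤ 2 * ((M : ℝ) - 1) / M *
      ((1 + Δ / ((M : ℝ) - 1)) * W ω - Dfun ω / 2) := by
    intro ω
    have hfib : ∀ j : Fin K, MeasurableSet {c : H | h c (ptX ω) = j} := by
      intro j
      by_cases hex : ∃ c0, h c0 (ptX ω) = j
      · obtain ⟨c0, hc0⟩ := hex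
        have he : {c : H | h c (ptX ω) = j} =
            (fun c => ((c, c0), ω)) ⁻¹' S'ᶜ := by
          ext c
          simp only [Set.mem_setOf_eq, Set.mem_preimage, Set.mem_compl_iff, hS',
            Set.mem_setOf_eq, not_not, hc0]
        rw [he]
        exact hjm'.compl.preimage
          (((measurable_id.prodMk measurable_const)).prodMk measurable_const)
      · have he : {c : H | h c (ptX ω) = j} = ∅ := by
          ext c
          simp only [Set.mem_setOf_eq, Set.mem_empty_iff_false, iff_false]
          exact fun hc => hex ⟨c, hc⟩
        rw [he]; exact MeasurableSet.empty
    have := pointwise_bound ρ (fun c => h c (ptX ω)) hfib (ptY ω) (A (ptX ω)) (hA ω)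
      M hM (hAcard ω) Δ (hAleak ω)
    rw [hWdef ω]
    exact this
  -- integrate the pointwise bound
  have hint_g : Integrable
      (fun ω => 2 * ((M : ℝ) - 1) / M * ((1 + Δ / ((M : ℝ) - 1)) * W ω - Dfun ω / 2)) μ :=
    (((hWint.const_mul _).sub (hDint.div_const 2)).const_mul _)
  have hI : ∫ ω, W ω ^ 2 ∂μ ≤ 2 * ((M : ℝ) - 1) / M *
      ((1 + Δ / ((M : ℝ) - 1)) * ∫ ω, W ω ∂μ - (1 / 2) * ∫ ω, Dfun ω ∂μ) := by
    have h1 : ∫ ω, W ω ^ 2 ∂μ ≤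
        ∫ ω, 2 * ((M : ℝ) - 1) / M * ((1 + Δ / ((M : ℝ) - 1)) * W ω - Dfun ω / 2) ∂μ :=
      integral_mono hW2int hint_g hpt
    have h2 : ∫ ω, 2 * ((M : ℝ) - 1) / M *
        ((1 + Δ / ((M : ℝ) - 1)) * W ω - Dfun ω / 2) ∂μ =
        2 * ((M : ℝ) - 1) / M *
          ((1 + Δ / ((M : ℝ) - 1)) * ∫ ω, W ω ∂μ - (1 / 2) * ∫ ω, Dfun ω ∂μ) := by
      rw [integral_const_mul, integral_sub (hWint.const_mul _) (hDint.div_const 2),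
        integral_const_mul, integral_div]
      ring
    linarith
  -- conclude
  rw [hEq1, hEq2]
  calc (μ {ω | hMV (ptX ω) ≠ ptY ω}).toReal ≤ (μ {ω | W ω > 1 / 2}).toReal := htiefree
    _ ≤ η * ∫ ω, W ω ^ 2 ∂μ := hpol
    _ ≤ η * (2 * ((M : ℝ) - 1) / M *
        ((1 + Δ / ((M : ℝ) - 1)) * ∫ ω, W ω ∂μ - (1 / 2) * ∫ ω, Dfun ω ∂μ)) :=
      mul_le_mul_of_nonneg_left hI hη
    _ = 2 * η * ((M : ℝ) - 1) / M *
        ((1 + Δ / ((M : ℝ) - 1)) * ∫ ω, W ω ∂μ - (1 / 2) * ∫ ω, Dfun ω ∂μ) := by ring
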